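/- arXiv:2409.19550 — 3 statements merged into one kernel-verified Lean document; each statement's English description precedes it below -/
import Mathlib

section
/- Let S⁰ be an n×n real symmetric matrix, let r be a positive integer, and define g : ℝ^{n×r} → ℝ by g(V) = ‖VVᵀ − S⁰‖_F². If V* ∈ ℝ^{n×r} is a local minimizer of g (with respect to the topology of ℝ^{n×r}) and rank(V*) < r, then V* is a global minimizer of g, i.e. g(V*) ≤ g(W) for every W ∈ ℝ^{n×r}. -/
open Matrix Filter Topology

/-!
Let `Δ = V Vᵀ - S` be the residual at the local minimizer `V`, and pair matrices by
`⟨A, B⟩ = vec A ⬝ᵥ vec B`. Since `rank V < r` there is `u ≠ 0` with `V u = 0`; along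
`V + t x uᵀ` the product `V Vᵀ` only moves by `t² ‖u‖² x xᵀ`, so the second-order condition
makes `Δ` positive semidefinite. Along the shrinking path `(1 - t) V` the first-order condition
gives `⟨Δ, V Vᵀ⟩ ≤ 0`. Hence for every `W`,
`g W = g V + 2 ⟨Δ, W Wᵀ⟩ - 2 ⟨Δ, V Vᵀ⟩ + ‖W Wᵀ - V Vᵀ‖² ≥ g V`.
-/

theorem nonneg_of_eventually_nonneg_pow_mul {f : ℝ → ℝ} (k : ℕ) (hf : ContinuousAt f 0)
    (h : ∀ᶠ t in 𝓝[>] 0, 0 ≤ t ^ k * f t) : 0 ≤ f 0 := by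
  refine ge_of_tendsto (hf.tendsto.mono_left (nhdsWithin_le_nhds (s := Set.Ioi 0))) ?_
  filter_upwards [h, self_mem_nhdsWithin] with t ht (ht0 : 0 < t)
  exact nonneg_of_mul_nonneg_right ht (pow_pos ht0 k)

theorem IsLocalMin.eventually_nhdsGT_le_comp {X : Type*} [TopologicalSpace X]
    {f : X → ℝ} {x : X} (hmin : IsLocalMin f x) {c : ℝ → X} (hc : Continuous c) (hc0 : c 0 = x) :
    ∀ᶠ t in 𝓝[>] 0, f x ≤ f (c t) := by
  subst hc0
  exact nhdsWithin_le_nhds (hmin.comp_continuous hc.continuousAt)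

namespace Matrix

theorem exists_mulVec_eq_zero_of_rank_lt {m n K : Type*} [Fintype n] [Field K]
    {A : Matrix m n K} (h : A.rank < Fintype.card n) : ∃ v, v ≠ 0 ∧ A *ᵥ v = 0 := by
  by_contra! hA
  have hinj : Function.Injective A.mulVecLin := by
    rw [← LinearMap.ker_eq_bot, LinearMap.ker_eq_bot']
    exact fun v hv => by_contra fun hv0 => hA v hv0 hv
  simp [rank, LinearMap.finrank_range_of_inj hinj] at h

theorem mul_eq_sum_vecMulVec_col_row {l m n R : Type*} [Fintype m] [CommSemiring R]
    (A : Matrix l m R) (B : Matrix m n R) : A * B = ∑ k, vecMulVec (A.col k) (B.row k) := by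
  ext i j
  simp [mul_apply, vecMulVec_apply, sum_apply]

variable {m n : Type*} [Fintype m] [Fintype n]

theorem sum_sum_sq_eq_vec_dotProduct_vec (A : Matrix m n ℝ) :
    ∑ i, ∑ j, A i j ^ 2 = vec A ⬝ᵥ vec A := by
  rw [vec_dotProduct_vec, trace, Finset.sum_comm]
  simp [mul_apply, sq]

theorem vec_dotProduct_vec_vecMulVec (D : Matrix m n ℝ) (x : m → ℝ) (y : n → ℝ) :
    vec D ⬝ᵥ vec (vecMulVec x y) = x ⬝ᵥ D *ᵥ y := by
  rw [vec_dotProduct_vec, mul_vecMulVec, trace_vecMulVec, dotProduct_mulVec, mulVec_transpose]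

theorem vec_add_smul_dotProduct_self (D M : Matrix m n ℝ) (s : ℝ) :
    vec (D + s • M) ⬝ᵥ vec (D + s • M) =
      vec D ⬝ᵥ vec D + 2 * s * (vec D ⬝ᵥ vec M) + s ^ 2 * (vec M ⬝ᵥ vec M) := by
  simp only [vec_add, vec_smul, dotProduct_add, add_dotProduct, dotProduct_smul, smul_dotProduct,
    dotProduct_comm (vec M) (vec D), smul_eq_mul]
  ring

end Matrix

section BurerMonteiro

variable {n k : Type*} [Fintype n] [Fintype k] {S : Matrix n n ℝ} {V : Matrix n k ℝ}

def burerMonteiroObjective (S : Matrix n n ℝ) (V : Matrix n k ℝ) : ℝ :=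
  ∑ i, ∑ j, ((V * Vᵀ - S) i j) ^ 2

theorem burerMonteiroObjective_eq_of_mul_transpose_eq {k' : Type*} [Fintype k']
    {V' : Matrix n k' ℝ} {s : ℝ} {M : Matrix n n ℝ} (h : V' * V'ᵀ = V * Vᵀ + s • M) :
    burerMonteiroObjective S V' = burerMonteiroObjective S V +
      2 * s * (vec (V * Vᵀ - S) ⬝ᵥ vec M) + s ^ 2 * (vec M ⬝ᵥ vec M) := by
  simp only [burerMonteiroObjective, sum_sum_sq_eq_vec_dotProduct_vec]
  rw [h, show V * Vᵀ + s • M - S = V * Vᵀ - S + s • M by abel, vec_add_smul_dotProduct_self]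

theorem burerMonteiroObjective_le_of_optimality_conditions {k' : Type*} [Fintype k']
    (hpsd : ∀ x, 0 ≤ x ⬝ᵥ (V * Vᵀ - S) *ᵥ x) (horth : vec (V * Vᵀ - S) ⬝ᵥ vec (V * Vᵀ) ≤ 0)
    (W : Matrix n k' ℝ) : burerMonteiroObjective S V ≤ burerMonteiroObjective S W := by
  set M := W * Wᵀ - V * Vᵀ
  have hcross : 0 ≤ vec (V * Vᵀ - S) ⬝ᵥ vec M := by
    rw [vec_sub (W * Wᵀ), dotProduct_sub, mul_eq_sum_vecMulVec_col_row W, vec_sum, dotProduct_sum]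
    simp only [vec_dotProduct_vec_vecMulVec, row_transpose]
    linarith [Finset.sum_nonneg fun k (_ : k ∈ Finset.univ) => hpsd (W.col k)]
  have hM : 0 ≤ vec M ⬝ᵥ vec M := Finset.sum_nonneg fun i _ => mul_self_nonneg _
  rw [burerMonteiroObjective_eq_of_mul_transpose_eq (V' := W) (s := 1) (M := M)
    (by rw [one_smul, add_sub_cancel])]
  nlinarith

theorem IsLocalMin.burerMonteiro_residual_quadForm_nonneg
    (hmin : IsLocalMin (burerMonteiroObjective S) V) {u : k → ℝ} (hu : u ≠ 0) (hVu : V *ᵥ u = 0)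
    (x : n → ℝ) : 0 ≤ x ⬝ᵥ (V * Vᵀ - S) *ᵥ x := by
  set c := u ⬝ᵥ u
  have hc : 0 < c := lt_of_le_of_ne (Finset.sum_nonneg fun i _ => mul_self_nonneg _)
    (Ne.symm (dotProduct_self_eq_zero.not.mpr hu))
  set H := vecMulVec x u
  have hVH : V * Hᵀ = 0 := by rw [transpose_vecMulVec, mul_vecMulVec, hVu, zero_vecMulVec]
  have hHV : H * Vᵀ = 0 := by rw [← transpose_transpose H, ← transpose_mul, hVH, transpose_zero]
  have hHH : H * Hᵀ = c • vecMulVec x x := by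
    rw [transpose_vecMulVec, vecMulVec_mul_vecMulVec, vecMulVec_smul]
  have hcurve : ∀ t : ℝ, (V + t • H) * (V + t • H)ᵀ = V * Vᵀ + (t ^ 2 * c) • vecMulVec x x := by
    intro t
    simp only [transpose_add, transpose_smul, Matrix.add_mul, Matrix.mul_add, Matrix.smul_mul,
      Matrix.mul_smul, hVH, hHV, hHH, smul_zero, add_zero, zero_add, smul_smul]
    ring_nf
  have hloc := hmin.eventually_nhdsGT_le_comp (c := fun t : ℝ => V + t • H) (by fun_prop) (by simp)
  rw [← vec_dotProduct_vec_vecMulVec]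
  set q := vec (V * Vᵀ - S) ⬝ᵥ vec (vecMulVec x x)
  set b := vec (vecMulVec x x) ⬝ᵥ vec (vecMulVec x x)
  have h0 := nonneg_of_eventually_nonneg_pow_mul 2 (f := fun t => 2 * c * q + t ^ 2 * (c ^ 2 * b))
    (by fun_prop) <| hloc.mono fun t ht => by
      rw [burerMonteiroObjective_eq_of_mul_transpose_eq (hcurve t)] at ht
      linear_combination ht
  nlinarith

theorem IsLocalMin.burerMonteiro_residual_dotProduct_nonpos
    (hmin : IsLocalMin (burerMonteiroObjective S) V) :
    vec (V * Vᵀ - S) ⬝ᵥ vec (V * Vᵀ) ≤ 0 := by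
  have hcurve : ∀ t : ℝ, ((1 - t) • V) * ((1 - t) • V)ᵀ = V * Vᵀ + (t ^ 2 - 2 * t) • (V * Vᵀ) := by
    intro t
    simp only [transpose_smul, Matrix.smul_mul, Matrix.mul_smul, smul_smul]
    module
  have hloc := hmin.eventually_nhdsGT_le_comp (c := fun t : ℝ => (1 - t) • V) (by fun_prop) (by simp)
  set a := vec (V * Vᵀ - S) ⬝ᵥ vec (V * Vᵀ)
  set b := vec (V * Vᵀ) ⬝ᵥ vec (V * Vᵀ)
  have h0 := nonneg_of_eventually_nonneg_pow_mul 1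
    (f := fun t => 2 * (t - 2) * a + t * (t - 2) ^ 2 * b) (by fun_prop) <| hloc.mono fun t ht => by
      rw [burerMonteiroObjective_eq_of_mul_transpose_eq (hcurve t)] at ht
      linear_combination ht
  linarith

end BurerMonteiro

theorem rank_deficient_local_min_is_global_general {n r : ℕ}
    (S0 : Matrix (Fin n) (Fin n) ℝ)
    (g : Matrix (Fin n) (Fin r) ℝ → ℝ)
    (hg : ∀ V : Matrix (Fin n) (Fin r) ℝ, g V = ∑ i, ∑ j, ((V * Vᵀ - S0) i j) ^ 2)
    (Vstar : Matrix (Fin n) (Fin r) ℝ)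
    (hmin : IsLocalMin g Vstar)
    (hrank : Vstar.rank < r) :
    ∀ W : Matrix (Fin n) (Fin r) ℝ, g Vstar ≤ g W := by
  obtain rfl : g = burerMonteiroObjective S0 := funext hg
  obtain ⟨u, hu, hVu⟩ := exists_mulVec_eq_zero_of_rank_lt (A := Vstar) (by rwa [Fintype.card_fin])
  exact burerMonteiroObjective_le_of_optimality_conditions (hmin.burerMonteiro_residual_quadForm_nonneg hu hVu)
    hmin.burerMonteiro_residual_dotProduct_nonpos

/-- Theorem 1 of the paper: a rank-deficient local minimizer of the
Burer–Monteiro factorized objective `g(V) = ‖VVᵀ − S⁰‖_F²` is a global minimizer. -/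
theorem rank_deficient_local_min_is_global {n r : ℕ} (hr : 0 < r)
    (S0 : Matrix (Fin n) (Fin n) ℝ) (hS0 : S0.IsSymm)
    (g : Matrix (Fin n) (Fin r) ℝ → ℝ)
    (hg : ∀ V : Matrix (Fin n) (Fin r) ℝ, g V = ∑ i, ∑ j, ((V * Vᵀ - S0) i j) ^ 2)
    (Vstar : Matrix (Fin n) (Fin r) ℝ)
    (hmin : IsLocalMin g Vstar)
    (hrank : Vstar.rank < r) :
    ∀ W : Matrix (Fin n) (Fin r) ℝ, g Vstar ≤ g W :=
  rank_deficient_local_min_is_global_general S0 g hg Vstar hmin hrank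
end

section
/- Let S⁰ be an n×n real symmetric matrix, let r be a positive integer, and define g : ℝ^{n×r} → ℝ by g(V) = ‖VVᵀ − S⁰‖_F². If V* ∈ ℝ^{n×r} is a local minimizer of g and rank(V*) < r, then the matrix Ŝ = V*V*ᵀ solves the rank-constrained PSD approximation problem: for every n×n real positive semidefinite matrix S with rank(S) ≤ r, one has ‖V*V*ᵀ − S⁰‖_F² ≤ ‖S − S⁰‖_F². -/
open Matrix

/-- A quartic polynomial with a local minimum at `0` has vanishing linear coefficient. -/
private lemma quartic_c1 {f : ℝ → ℝ} {c0 c1 c2 c3 c4 : ℝ}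
    (hf : ∀ t, f t = c0 + c1 * t + c2 * t ^ 2 + c3 * t ^ 3 + c4 * t ^ 4)
    (h : IsLocalMin f 0) : c1 = 0 := by
  have hfe : f = fun t => c0 + c1 * t + c2 * t ^ 2 + c3 * t ^ 3 + c4 * t ^ 4 := funext hf
  subst hfe
  have hd : HasDerivAt (fun t : ℝ => c0 + c1 * t + c2 * t ^ 2 + c3 * t ^ 3 + c4 * t ^ 4)
      (0 + c1 * 1 + c2 * (↑2 * (0:ℝ) ^ (2 - 1)) + c3 * (↑3 * (0:ℝ) ^ (3 - 1))
        + c4 * (↑4 * (0:ℝ) ^ (4 - 1))) 0 := by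
    exact ((((hasDerivAt_const (0:ℝ) c0).add ((hasDerivAt_id (0:ℝ)).const_mul c1)).add
      ((hasDerivAt_pow 2 (0:ℝ)).const_mul c2)).add
      ((hasDerivAt_pow 3 (0:ℝ)).const_mul c3)).add
      ((hasDerivAt_pow 4 (0:ℝ)).const_mul c4)
  have hd' : HasDerivAt (fun t : ℝ => c0 + c1 * t + c2 * t ^ 2 + c3 * t ^ 3 + c4 * t ^ 4)
      c1 0 := by convert hd using 1; norm_num
  exact h.hasDerivAt_eq_zero hd'

/-- An even quartic with a local minimum at `0` has nonnegative quadratic coefficient. -/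
private lemma quartic_c2 {f : ℝ → ℝ} {c0 c2 c4 : ℝ}
    (hf : ∀ t, f t = c0 + c2 * t ^ 2 + c4 * t ^ 4)
    (h : IsLocalMin f 0) : 0 ≤ c2 := by
  by_contra hc
  push_neg at hc
  obtain ⟨δ, hδpos, hδ⟩ := Metric.eventually_nhds_iff.mp h
  set s : ℝ := -c2 / (2 * (|c4| + 1)) with hs
  have hspos : 0 < s := div_pos (by linarith) (by positivity)
  set t : ℝ := min (δ / 2) (Real.sqrt s) with ht
  have ht0 : 0 < t := lt_min (by linarith) (Real.sqrt_pos.mpr hspos)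
  have ht2 : t ^ 2 ≤ s := by
    have h1 : t ≤ Real.sqrt s := min_le_right _ _
    calc t ^ 2 ≤ (Real.sqrt s) ^ 2 := by nlinarith [Real.sqrt_nonneg s]
      _ = s := Real.sq_sqrt hspos.le
  have hdist : dist t 0 < δ := by
    rw [Real.dist_eq, sub_zero, abs_of_pos ht0]
    calc t ≤ δ / 2 := min_le_left _ _
      _ < δ := by linarith
  have hmin := hδ hdist
  rw [hf t, hf 0] at hmin
  have h0 : 0 ≤ c2 * t ^ 2 + c4 * t ^ 4 := by nlinarith [hmin]
  have h1 : c4 * t ^ 2 ≤ |c4| * t ^ 2 :=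
    mul_le_mul_of_nonneg_right (le_abs_self c4) (sq_nonneg t)
  have h2 : |c4| * t ^ 2 ≤ (|c4| + 1) * s :=
    mul_le_mul (by linarith) ht2 (sq_nonneg t) (by positivity)
  have h3 : (|c4| + 1) * s = -c2 / 2 := by
    rw [hs]; field_simp
  have h4 : c4 * t ^ 2 * t ^ 2 ≤ (-c2 / 2) * t ^ 2 :=
    mul_le_mul_of_nonneg_right (by linarith) (sq_nonneg t)
  have ht2pos : 0 < t ^ 2 := by positivity
  nlinarith [h0, h4, ht2pos]

/-- Sum exchange: `⟪M, D Vᵀ⟫ = ⟪M V, D⟫`. -/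
private lemma sum_mul_DVt {n r : ℕ} (M : Matrix (Fin n) (Fin n) ℝ)
    (D V : Matrix (Fin n) (Fin r) ℝ) :
    ∑ i, ∑ j, M i j * (D * Vᵀ) i j = ∑ i, ∑ k, (M * V) i k * D i k := by
  simp only [Matrix.mul_apply, Matrix.transpose_apply, Finset.mul_sum, Finset.sum_mul]
  refine Finset.sum_congr rfl fun i _ => ?_
  rw [Finset.sum_comm]
  exact Finset.sum_congr rfl fun k _ => Finset.sum_congr rfl fun j _ => by ring

/-- Sum exchange: `⟪M, V Dᵀ⟫ = ⟪Mᵀ V, D⟫`. -/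
private lemma sum_mul_VDt {n r : ℕ} (M : Matrix (Fin n) (Fin n) ℝ)
    (V D : Matrix (Fin n) (Fin r) ℝ) :
    ∑ i, ∑ j, M i j * (V * Dᵀ) i j = ∑ j, ∑ k, (Mᵀ * V) j k * D j k := by
  rw [Finset.sum_comm]
  simp only [Matrix.mul_apply, Matrix.transpose_apply, Finset.mul_sum, Finset.sum_mul]
  refine Finset.sum_congr rfl fun j _ => ?_
  rw [Finset.sum_comm]
  exact Finset.sum_congr rfl fun k _ => Finset.sum_congr rfl fun i _ => by ring

/-- Conclusion of the paper's Theorem 1 for the original rank-constrained PSD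
approximation problem: a rank-deficient local minimizer `V*` of
`g(V) = ‖VVᵀ − S⁰‖_F²` yields `Ŝ = V*V*ᵀ` solving
`min_{S ⪰ 0, rank(S) ≤ r} ‖S − S⁰‖_F²`. -/
theorem rank_deficient_local_min_solves_psd_problem {n r : ℕ} (hr : 0 < r)
    (S0 : Matrix (Fin n) (Fin n) ℝ) (hS0 : S0.IsSymm)
    (g : Matrix (Fin n) (Fin r) ℝ → ℝ)
    (hg : ∀ V : Matrix (Fin n) (Fin r) ℝ, g V = ∑ i, ∑ j, ((V * Vᵀ - S0) i j) ^ 2)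
    (Vstar : Matrix (Fin n) (Fin r) ℝ)
    (hmin : IsLocalMin g Vstar)
    (hrank : Vstar.rank < r) :
    ∀ S : Matrix (Fin n) (Fin n) ℝ, S.PosSemidef → S.rank ≤ r →
      ∑ i, ∑ j, ((Vstar * Vstarᵀ - S0) i j) ^ 2 ≤ ∑ i, ∑ j, ((S - S0) i j) ^ 2 := by
  intro S hS _
  set M : Matrix (Fin n) (Fin n) ℝ := Vstar * Vstarᵀ - S0 with hM
  -- M is symmetric
  have hMt : Mᵀ = M := by
    rw [hM, Matrix.transpose_sub, Matrix.transpose_mul, Matrix.transpose_transpose, hS0.eq]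
  -- local minimum along every line
  have hline : ∀ D : Matrix (Fin n) (Fin r) ℝ,
      IsLocalMin (fun t : ℝ => g (Vstar + t • D)) 0 := by
    intro D
    have hc : ContinuousAt (fun t : ℝ => Vstar + t • D) 0 := by fun_prop
    have h0 : (Vstar + (0:ℝ) • D) = Vstar := by simp
    have hm : IsLocalMin g ((fun t : ℝ => Vstar + t • D) 0) := by
      show IsLocalMin g (Vstar + (0:ℝ) • D)
      rw [h0]; exact hmin
    exact
      IsLocalMin.comp_continuous (g := fun t : ℝ => Vstar + t • D) (b := (0:ℝ)) hm hc
  -- quartic expansion along a line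
  have hexp : ∀ (D : Matrix (Fin n) (Fin r) ℝ) (t : ℝ),
      g (Vstar + t • D) =
        (∑ i, ∑ j, (M i j) ^ 2)
        + (∑ i, ∑ j, 2 * M i j * ((Vstar * Dᵀ + D * Vstarᵀ) i j)) * t
        + (∑ i, ∑ j, (((Vstar * Dᵀ + D * Vstarᵀ) i j) ^ 2
            + 2 * M i j * ((D * Dᵀ) i j))) * t ^ 2
        + (∑ i, ∑ j, 2 * ((Vstar * Dᵀ + D * Vstarᵀ) i j) * ((D * Dᵀ) i j)) * t ^ 3
        + (∑ i, ∑ j, ((D * Dᵀ) i j) ^ 2) * t ^ 4 := by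
    intro D t
    rw [hg]
    have h1 : ∀ i j, ((Vstar + t • D) * (Vstar + t • D)ᵀ - S0) i j
        = M i j + t * ((Vstar * Dᵀ + D * Vstarᵀ) i j) + t ^ 2 * ((D * Dᵀ) i j) := by
      intro i j
      simp only [hM, Matrix.sub_apply, Matrix.add_apply, Matrix.mul_apply,
        Matrix.transpose_apply, Matrix.smul_apply, smul_eq_mul]
      rw [show (∑ k, (Vstar i k + t * D i k) * (Vstar j k + t * D j k))
          = ∑ k, (Vstar i k * Vstar j k
              + t * (Vstar i k * D j k + D i k * Vstar j k)
              + t ^ 2 * (D i k * D j k)) from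
        Finset.sum_congr rfl fun k _ => by ring]
      simp only [Finset.sum_add_distrib, ← Finset.mul_sum]
      ring
    calc ∑ i, ∑ j, (((Vstar + t • D) * (Vstar + t • D)ᵀ - S0) i j) ^ 2
        = ∑ i, ∑ j, ((M i j) ^ 2
            + t * (2 * M i j * ((Vstar * Dᵀ + D * Vstarᵀ) i j))
            + t ^ 2 * (((Vstar * Dᵀ + D * Vstarᵀ) i j) ^ 2
                + 2 * M i j * ((D * Dᵀ) i j))
            + t ^ 3 * (2 * ((Vstar * Dᵀ + D * Vstarᵀ) i j) * ((D * Dᵀ) i j))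
            + t ^ 4 * (((D * Dᵀ) i j) ^ 2)) := by
          refine Finset.sum_congr rfl fun i _ => Finset.sum_congr rfl fun j _ => ?_
          rw [h1 i j]; ring
      _ = _ := by
          simp only [Finset.sum_add_distrib, ← Finset.mul_sum]
          ring
  -- first-order condition
  have hfo : ∀ D : Matrix (Fin n) (Fin r) ℝ,
      (∑ i, ∑ j, 2 * M i j * ((Vstar * Dᵀ + D * Vstarᵀ) i j)) = 0 := by
    intro D
    exact quartic_c1 (hexp D) (hline D)
  -- split the first-order sum
  have hsplit : ∀ D : Matrix (Fin n) (Fin r) ℝ,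
      (∑ i, ∑ j, 2 * M i j * ((Vstar * Dᵀ + D * Vstarᵀ) i j))
        = 2 * ((∑ i, ∑ j, M i j * (Vstar * Dᵀ) i j)
            + ∑ i, ∑ j, M i j * (D * Vstarᵀ) i j) := by
    intro D
    calc (∑ i, ∑ j, 2 * M i j * ((Vstar * Dᵀ + D * Vstarᵀ) i j))
        = ∑ i, ∑ j, (2 * (M i j * (Vstar * Dᵀ) i j) + 2 * (M i j * (D * Vstarᵀ) i j)) := by
          refine Finset.sum_congr rfl fun i _ => Finset.sum_congr rfl fun j _ => ?_
          simp only [Matrix.add_apply]; ring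
      _ = _ := by
          simp only [Finset.sum_add_distrib, ← Finset.mul_sum]
          ring
  -- MV = 0
  have hMV : M * Vstar = 0 := by
    have h := hfo (M * Vstar)
    rw [hsplit (M * Vstar), sum_mul_VDt M Vstar (M * Vstar),
      sum_mul_DVt M (M * Vstar) Vstar, hMt] at h
    have hsq : ∑ i, ∑ k, ((M * Vstar) i k) ^ 2 = 0 := by
      have h' : ∑ i, ∑ k, (M * Vstar) i k * (M * Vstar) i k = 0 := by linarith
      calc ∑ i, ∑ k, ((M * Vstar) i k) ^ 2
          = ∑ i, ∑ k, (M * Vstar) i k * (M * Vstar) i k :=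
            Finset.sum_congr rfl fun i _ => Finset.sum_congr rfl fun k _ => by ring
        _ = 0 := h'
    ext i k
    have h2 : ∀ i ∈ Finset.univ, ∑ k, ((M * Vstar) i k) ^ 2 = 0 :=
      (Finset.sum_eq_zero_iff_of_nonneg
        (fun i _ => Finset.sum_nonneg fun k _ => sq_nonneg _)).mp hsq
    have h3 : ∀ k ∈ Finset.univ, ((M * Vstar) i k) ^ 2 = 0 :=
      (Finset.sum_eq_zero_iff_of_nonneg (fun k _ => sq_nonneg _)).mp
        (h2 i (Finset.mem_univ i))
    have := h3 k (Finset.mem_univ k)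
    have := pow_eq_zero_iff (n := 2) (by norm_num) |>.mp this
    simpa using this
  -- kernel vector
  have hker : ∃ z : Fin r → ℝ, z ≠ 0 ∧ Vstar.mulVec z = 0 := by
    have hrn := LinearMap.finrank_range_add_finrank_ker Vstar.mulVecLin
    rw [Module.finrank_fin_fun] at hrn
    have hrk : Vstar.rank = Module.finrank ℝ (LinearMap.range Vstar.mulVecLin) := rfl
    have hkerpos : 0 < Module.finrank ℝ (LinearMap.ker Vstar.mulVecLin) := by omega
    obtain ⟨⟨z, hz⟩, hzne⟩ := Module.finrank_pos_iff_exists_ne_zero.mp hkerpos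
    refine ⟨z, ?_, ?_⟩
    · intro h0
      apply hzne
      exact Subtype.ext h0
    · simpa [Matrix.mulVecLin_apply] using hz
  obtain ⟨z, hzne, hzker⟩ := hker
  have hzsum : 0 < ∑ l, z l ^ 2 := by
    obtain ⟨l, hl⟩ := Function.ne_iff.mp hzne
    exact Finset.sum_pos' (fun l _ => sq_nonneg _)
      ⟨l, Finset.mem_univ l, lt_of_le_of_ne (sq_nonneg _) (Ne.symm (pow_ne_zero 2 hl))⟩
  -- second-order condition: M is PSD (as a quadratic form)
  have hpsd : ∀ u : Fin n → ℝ, 0 ≤ ∑ i, ∑ j, u i * M i j * u j := by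
    intro u
    set D : Matrix (Fin n) (Fin r) ℝ := Matrix.of fun i l => u i * z l with hD
    have hB : Vstar * Dᵀ + D * Vstarᵀ = 0 := by
      ext i j
      have hzi : ∀ i, ∑ k, Vstar i k * z k = 0 := by
        intro i
        have := congrFun hzker i
        simpa [Matrix.mulVec, dotProduct] using this
      simp only [Matrix.add_apply, Matrix.mul_apply, Matrix.transpose_apply, hD,
        Matrix.of_apply, Matrix.zero_apply]
      have e1 : ∑ k, Vstar i k * (u j * z k) = u j * ∑ k, Vstar i k * z k := by
        rw [Finset.mul_sum]; exact Finset.sum_congr rfl fun k _ => by ring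
      have e2 : ∑ k, u i * z k * Vstar j k = u i * ∑ k, Vstar j k * z k := by
        rw [Finset.mul_sum]; exact Finset.sum_congr rfl fun k _ => by ring
      rw [e1, e2, hzi i, hzi j]; ring
    have hC : ∀ i j, (D * Dᵀ) i j = (∑ l, z l ^ 2) * (u i * u j) := by
      intro i j
      simp only [Matrix.mul_apply, Matrix.transpose_apply, hD, Matrix.of_apply]
      rw [Finset.sum_mul]
      exact Finset.sum_congr rfl fun l _ => by ring
    have hA1 : (∑ i, ∑ j, 2 * M i j * ((Vstar * Dᵀ + D * Vstarᵀ) i j)) = 0 := by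
      rw [hB]; simp
    have hA3 : (∑ i, ∑ j, 2 * ((Vstar * Dᵀ + D * Vstarᵀ) i j) * ((D * Dᵀ) i j)) = 0 := by
      rw [hB]; simp
    have hc2 : 0 ≤ ∑ i, ∑ j, (((Vstar * Dᵀ + D * Vstarᵀ) i j) ^ 2
        + 2 * M i j * ((D * Dᵀ) i j)) := by
      refine quartic_c2 (c0 := ∑ i, ∑ j, (M i j) ^ 2)
        (c4 := ∑ i, ∑ j, ((D * Dᵀ) i j) ^ 2) (fun t => ?_) (hline D)
      rw [hexp D t, hA1, hA3]; ring
    have hA2eq : (∑ i, ∑ j, (((Vstar * Dᵀ + D * Vstarᵀ) i j) ^ 2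
          + 2 * M i j * ((D * Dᵀ) i j)))
        = (2 * ∑ l, z l ^ 2) * ∑ i, ∑ j, u i * M i j * u j := by
      rw [Finset.mul_sum]
      refine Finset.sum_congr rfl fun i _ => ?_
      rw [Finset.mul_sum]
      refine Finset.sum_congr rfl fun j _ => ?_
      rw [hB, hC i j]
      simp only [Matrix.zero_apply]
      ring
    rw [hA2eq] at hc2
    have hw : (0:ℝ) < 2 * ∑ l, z l ^ 2 := by positivity
    nlinarith [hc2, hw]
  -- ⟪M, S⟫ ≥ 0 since S is PSD
  have hSM : 0 ≤ ∑ i, ∑ j, M i j * S i j := by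
    obtain ⟨B, hBS⟩ : ∃ B : Matrix (Fin n) (Fin n) ℝ, S = Bᴴ * B := by
      open scoped MatrixOrder in
      exact ⟨CFC.sqrt S, by rw [show (CFC.sqrt S)ᴴ = CFC.sqrt S from (CFC.sqrt_nonneg S).isSelfAdjoint.star_eq]; exact (CFC.sqrt_mul_sqrt_self S hS.nonneg).symm⟩
    have key : ∑ i, ∑ j, M i j * S i j
        = ∑ k, ∑ i, ∑ j, B k i * M i j * B k j := by
      calc ∑ i, ∑ j, M i j * S i j
          = ∑ i, ∑ j, ∑ k, M i j * (B k i * B k j) := by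
            rw [hBS]
            simp only [Matrix.mul_apply, Matrix.conjTranspose_apply, star_trivial,
              Finset.mul_sum]
        _ = ∑ i, ∑ k, ∑ j, M i j * (B k i * B k j) :=
            Finset.sum_congr rfl fun i _ => Finset.sum_comm
        _ = ∑ k, ∑ i, ∑ j, M i j * (B k i * B k j) := Finset.sum_comm
        _ = ∑ k, ∑ i, ∑ j, B k i * M i j * B k j :=
            Finset.sum_congr rfl fun k _ => Finset.sum_congr rfl fun i _ =>
              Finset.sum_congr rfl fun j _ => by ring
    rw [key]
    exact Finset.sum_nonneg fun k _ => hpsd (fun i => B k i)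
  -- ⟪M, V*V*ᵀ⟫ = 0
  have hMS : ∑ i, ∑ j, M i j * (Vstar * Vstarᵀ) i j = 0 := by
    rw [sum_mul_DVt M Vstar Vstar, hMV]
    simp
  -- final expansion and conclusion
  have hexp2 : ∑ i, ∑ j, ((S - S0) i j) ^ 2
      = (∑ i, ∑ j, (M i j) ^ 2)
        + (2 * ((∑ i, ∑ j, M i j * S i j)
            - (∑ i, ∑ j, M i j * (Vstar * Vstarᵀ) i j))
          + ∑ i, ∑ j, ((S - Vstar * Vstarᵀ) i j) ^ 2) := by
    have e : ∀ i j, ((S - S0) i j) ^ 2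
        = (M i j) ^ 2 + (2 * (M i j * S i j) - 2 * (M i j * (Vstar * Vstarᵀ) i j)
            + ((S - Vstar * Vstarᵀ) i j) ^ 2) := by
      intro i j
      simp only [hM, Matrix.sub_apply]
      ring
    simp_rw [e]
    simp only [Finset.sum_add_distrib, Finset.sum_sub_distrib, ← Finset.mul_sum]
    ring
  rw [hexp2, hMS]
  have hsq : 0 ≤ ∑ i, ∑ j, ((S - Vstar * Vstarᵀ) i j) ^ 2 :=
    Finset.sum_nonneg fun i _ => Finset.sum_nonneg fun j _ => sq_nonneg _
  linarith
end

section
/- Let S⁰ be an n×n real matrix, let λ ≥ 0, G ≥ 0, and define the gradient map ∇F₁(V) = 4(VVᵀ − S⁰)V + 2λV for V ∈ ℝ^{n×r}. Then for all A, B ∈ ℝ^{n×r} with ‖A‖_F ≤ G and ‖B‖_F ≤ G, one has ‖∇F₁(A) − ∇F₁(B)‖_F ≤ (12G² + 2λ + 4‖S⁰‖_F)·‖A − B‖_F. -/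
open Matrix

/-- The Frobenius norm of a real matrix, `‖A‖_F = √(∑ i j, A i j ^ 2)`. -/
noncomputable def frobNorm {m n : Type*} [Fintype m] [Fintype n] (A : Matrix m n ℝ) : ℝ :=
  Real.sqrt (∑ i, ∑ j, (A i j) ^ 2)

/-!
Write `∇F₁(A) − ∇F₁(B) = 4(AAᵀA − BBᵀB) − 4S⁰(A − B) + 2λ(A − B)` and telescope the cubic term,
`AAᵀA − BBᵀB = (A − B)AᵀA + B(A − B)ᵀA + BBᵀ(A − B)`. By submultiplicativity each of the three
summands has Frobenius norm at most `G²‖A − B‖_F` on the ball of radius `G`, and the linear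
terms contribute `4‖S⁰‖_F‖A − B‖_F` and `2λ‖A − B‖_F`.
-/

attribute [local instance] Matrix.frobeniusNormedAddCommGroup Matrix.frobeniusNormedSpace

namespace Matrix

variable {m n : Type*} [Fintype m] [Fintype n]

theorem mul_transpose_mul_sub_mul_transpose_mul {R : Type*} [CommRing R] (A B : Matrix m n R) :
    A * Aᵀ * A - B * Bᵀ * B = (A - B) * Aᵀ * A + B * (A - B)ᵀ * A + B * Bᵀ * (A - B) := by
  simp only [Matrix.sub_mul, Matrix.mul_sub, transpose_sub]
  abel

variable {𝕜 : Type*} [RCLike 𝕜]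

theorem frobenius_norm_mul_mul_le {l p : Type*} [Fintype l] [Fintype p]
    (X : Matrix l m 𝕜) (Y : Matrix m n 𝕜) (Z : Matrix n p 𝕜) :
    ‖X * Y * Z‖ ≤ ‖X‖ * ‖Y‖ * ‖Z‖ :=
  (frobenius_norm_mul _ _).trans <| by gcongr; exact frobenius_norm_mul _ _

theorem frobenius_norm_mul_transpose_mul_sub_le {A B : Matrix m n 𝕜} {G : ℝ}
    (hA : ‖A‖ ≤ G) (hB : ‖B‖ ≤ G) :
    ‖A * Aᵀ * A - B * Bᵀ * B‖ ≤ 3 * G ^ 2 * ‖A - B‖ := by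
  have hG : 0 ≤ G := (norm_nonneg A).trans hA
  rw [mul_transpose_mul_sub_mul_transpose_mul]
  calc _ ≤ ‖(A - B) * Aᵀ * A‖ + ‖B * (A - B)ᵀ * A‖ + ‖B * Bᵀ * (A - B)‖ := norm_add₃_le
    _ ≤ ‖A - B‖ * ‖Aᵀ‖ * ‖A‖ + ‖B‖ * ‖(A - B)ᵀ‖ * ‖A‖ + ‖B‖ * ‖Bᵀ‖ * ‖A - B‖ := by
      gcongr <;> exact frobenius_norm_mul_mul_le _ _ _
    _ ≤ ‖A - B‖ * G * G + G * ‖A - B‖ * G + G * G * ‖A - B‖ := by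
      simp only [frobenius_norm_transpose]
      gcongr
    _ = 3 * G ^ 2 * ‖A - B‖ := by ring

end Matrix

theorem frobNorm_eq_norm {m n : Type*} [Fintype m] [Fintype n] (A : Matrix m n ℝ) :
    frobNorm A = ‖A‖ := by
  rw [frobNorm, frobenius_norm_def, Real.sqrt_eq_rpow]
  simp only [Real.norm_eq_abs, Real.rpow_two, sq_abs]

theorem gradient_lipschitz_on_ball_general {n r : ℕ}
    (S0 : Matrix (Fin n) (Fin n) ℝ) (lam G : ℝ) (hlam : 0 ≤ lam)
    (grad : Matrix (Fin n) (Fin r) ℝ → Matrix (Fin n) (Fin r) ℝ)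
    (hgrad : ∀ V : Matrix (Fin n) (Fin r) ℝ,
      grad V = (4 : ℝ) • ((V * Vᵀ - S0) * V) + (2 * lam) • V)
    (A B : Matrix (Fin n) (Fin r) ℝ)
    (hA : frobNorm A ≤ G) (hB : frobNorm B ≤ G) :
    frobNorm (grad A - grad B) ≤
      (12 * G ^ 2 + 2 * lam + 4 * frobNorm S0) * frobNorm (A - B) := by
  simp only [frobNorm_eq_norm] at *
  have hdiff : grad A - grad B =
      (4 : ℝ) • (A * Aᵀ * A - B * Bᵀ * B) - (4 : ℝ) • (S0 * (A - B)) + (2 * lam) • (A - B) := by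
    simp only [hgrad, Matrix.sub_mul, Matrix.mul_sub, Matrix.mul_assoc]
    module
  have hcubic := frobenius_norm_mul_transpose_mul_sub_le hA hB
  have hlin : ‖S0 * (A - B)‖ ≤ ‖S0‖ * ‖A - B‖ := frobenius_norm_mul _ _
  rw [hdiff]
  calc _ ≤ ‖(4 : ℝ) • (A * Aᵀ * A - B * Bᵀ * B)‖ + ‖(4 : ℝ) • (S0 * (A - B))‖
        + ‖(2 * lam) • (A - B)‖ := (norm_add_le _ _).trans (by gcongr; exact norm_sub_le _ _)
    _ = 4 * ‖A * Aᵀ * A - B * Bᵀ * B‖ + 4 * ‖S0 * (A - B)‖ + 2 * lam * ‖A - B‖ := by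
      simp only [norm_smul, Real.norm_eq_abs, abs_of_nonneg (by positivity : (0 : ℝ) ≤ 4),
        abs_of_nonneg (by positivity : 0 ≤ 2 * lam)]
    _ ≤ 4 * (3 * G ^ 2 * ‖A - B‖) + 4 * (‖S0‖ * ‖A - B‖) + 2 * lam * ‖A - B‖ := by gcongr
    _ = (12 * G ^ 2 + 2 * lam + 4 * ‖S0‖) * ‖A - B‖ := by ring

/-- The paper's appendix Lemma 4: the gradient map `∇F₁(V) = 4(VVᵀ − S⁰)V + 2λV`
of the SMCNN objective is Lipschitz on the Frobenius ball of radius `G`, with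
constant `12G² + 2λ + 4‖S⁰‖_F`. -/
theorem gradient_lipschitz_on_ball {n r : ℕ}
    (S0 : Matrix (Fin n) (Fin n) ℝ) (lam G : ℝ) (hlam : 0 ≤ lam) (hG : 0 ≤ G)
    (grad : Matrix (Fin n) (Fin r) ℝ → Matrix (Fin n) (Fin r) ℝ)
    (hgrad : ∀ V : Matrix (Fin n) (Fin r) ℝ,
      grad V = (4 : ℝ) • ((V * Vᵀ - S0) * V) + (2 * lam) • V)
    (A B : Matrix (Fin n) (Fin r) ℝ)
    (hA : frobNorm A ≤ G) (hB : frobNorm B ≤ G) :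
    frobNorm (grad A - grad B) ≤
      (12 * G ^ 2 + 2 * lam + 4 * frobNorm S0) * frobNorm (A - B) :=
  gradient_lipschitz_on_ball_general S0 lam G hlam grad hgrad A B hA hB
end
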